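/- arXiv:2010.00892 — 3 statements merged into one kernel-verified Lean document; each statement's English description precedes it below -/
import Mathlib

section
/- Let f_1, …, f_n : ℝ^d → ℝ each be convex and differentiable with L_max-Lipschitz gradient, let f(x) = (1/n)∑_{i=1}^n f_i(x), and let x⋆ be a point with ∇f(x⋆) = 0. Then for every x ∈ ℝ^d, (1/n)∑_{i=1}^n ‖∇f_i(x) − ∇f_i(x⋆)‖² ≤ 2 L_max (f(x) − f(x⋆)). -/
open scoped BigOperators

open InnerProductSpace

variable {E : Type*} [NormedAddCommGroup E] [InnerProductSpace ℝ E] [CompleteSpace E]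

lemma inner_gradient_eq (g : E → ℝ) (p v : E) :
    (inner ℝ (gradient g p) v : ℝ) = fderiv ℝ g p v := by
  simp [gradient, ← InnerProductSpace.toDual_apply_apply]

lemma convex_first_order (g : E → ℝ) (hg : ConvexOn ℝ Set.univ g)
    (hd : Differentiable ℝ g) (y z : E) :
    g y + (inner ℝ (gradient g y) (z - y) : ℝ) ≤ g z := by
  set v := z - y with hv
  set c : ℝ → E := fun t => y + t • v with hc
  have hcur : ∀ t : ℝ, HasDerivAt c v t := by
    intro t
    exact (by simpa using ((hasDerivAt_id t).smul_const v).const_add y : HasDerivAt (fun s => y + s • v) v t)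
  have hder : ∀ t : ℝ, HasDerivAt (fun s => g (c s)) (fderiv ℝ g (c t) v) t := by
    intro t
    exact (hd (c t)).hasFDerivAt.comp_hasDerivAt t (hcur t)
  have hφ : ConvexOn ℝ Set.univ (fun t => g (c t)) := by
    refine ⟨convex_univ, fun p _ q _ a b ha hb hab => ?_⟩
    have h2 := hg.2 (Set.mem_univ (c p)) (Set.mem_univ (c q)) ha hb hab
    have heq : c (a * p + b * q) = a • c p + b • c q := by
      simp only [hc]
      set_option linter.unnecessarySeqFocus false in
      match_scalars <;> simp <;> nlinarith [hab]
    simp only [smul_eq_mul]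
    rw [heq]
    simpa using h2
  have hslope := hφ.le_slope_of_hasDerivAt (Set.mem_univ (0:ℝ)) (Set.mem_univ (1:ℝ))
    one_pos (hder 0)
  have h0 : c 0 = y := by simp [hc]
  have h1 : c 1 = z := by simp [hc, hv]
  rw [slope_def_field] at hslope
  rw [← inner_gradient_eq] at hslope
  simp [h0, h1] at hslope
  linarith [inner_gradient_eq g y v]

lemma descent_lemma (g : E → ℝ) (hd : Differentiable ℝ g) (L : ℝ) (hL : 0 ≤ L)
    (hlip : ∀ p q, ‖gradient g p - gradient g q‖ ≤ L * ‖p - q‖) (a b : E) :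
    g b ≤ g a + (inner ℝ (gradient g a) (b - a) : ℝ) + L / 2 * ‖b - a‖ ^ 2 := by
  set v := b - a with hv
  set c : ℝ → E := fun t => a + t • v with hc
  have hcur : ∀ t : ℝ, HasDerivAt c v t := by
    intro t
    exact (by simpa using ((hasDerivAt_id t).smul_const v).const_add a : HasDerivAt (fun s => a + s • v) v t)
  have hder : ∀ t : ℝ, HasDerivAt (fun s => g (c s))
      ((inner ℝ (gradient g (c t)) v : ℝ)) t := by
    intro t
    rw [inner_gradient_eq]
    exact (hd (c t)).hasFDerivAt.comp_hasDerivAt t (hcur t)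
  -- continuity of the integrand
  have hgradcont : Continuous (gradient g) := by
    rcases eq_or_lt_of_le hL with hL0 | hLpos
    · have : ∀ p, gradient g p = gradient g 0 := by
        intro p
        have h := hlip p 0
        rw [← hL0, zero_mul] at h
        have : ‖gradient g p - gradient g 0‖ = 0 := le_antisymm h (norm_nonneg _)
        rw [norm_eq_zero, sub_eq_zero] at this
        exact this
      rw [funext this]; exact continuous_const
    · exact (LipschitzWith.of_dist_le_mul (K := ⟨L, hL⟩) (fun p q => by
        rw [dist_eq_norm, dist_eq_norm]; exact hlip p q)).continuous
  have hccont : Continuous c := by fun_prop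
  have hicont : Continuous fun t : ℝ => (inner ℝ (gradient g (c t)) v : ℝ) :=
    Continuous.inner (hgradcont.comp hccont) continuous_const
  have hfund : ∫ t in (0:ℝ)..1, (inner ℝ (gradient g (c t)) v : ℝ)
      = g (c 1) - g (c 0) :=
    intervalIntegral.integral_eq_sub_of_hasDerivAt (fun t _ => hder t)
      (hicont.intervalIntegrable 0 1)
  have hmono : ∫ t in (0:ℝ)..1, (inner ℝ (gradient g (c t)) v : ℝ)
      ≤ ∫ t in (0:ℝ)..1, ((inner ℝ (gradient g a) v : ℝ) + L * t * ‖v‖ ^ 2) := by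
    apply intervalIntegral.integral_mono_on zero_le_one
      (hicont.intervalIntegrable 0 1)
      (((by fun_prop : Continuous fun t : ℝ =>
        (inner ℝ (gradient g a) v : ℝ) + L * t * ‖v‖ ^ 2)).intervalIntegrable 0 1)
    intro t ht
    have h1 : (inner ℝ (gradient g (c t) - gradient g a) v : ℝ)
        ≤ ‖gradient g (c t) - gradient g a‖ * ‖v‖ := real_inner_le_norm _ _
    have h2 : ‖gradient g (c t) - gradient g a‖ ≤ L * (t * ‖v‖) := by
      have := hlip (c t) a
      have hca : c t - a = t • v := by simp [hc]
      rw [hca] at this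
      simpa [norm_smul, abs_of_nonneg ht.1] using this
    have h3 : (inner ℝ (gradient g (c t) - gradient g a) v : ℝ) ≤ L * t * ‖v‖ ^ 2 := by
      calc (inner ℝ (gradient g (c t) - gradient g a) v : ℝ)
          ≤ ‖gradient g (c t) - gradient g a‖ * ‖v‖ := h1
        _ ≤ L * (t * ‖v‖) * ‖v‖ := by
            apply mul_le_mul_of_nonneg_right h2 (norm_nonneg _)
        _ = L * t * ‖v‖ ^ 2 := by ring
    rw [inner_sub_left] at h3
    linarith
  have hval : ∫ t in (0:ℝ)..1, ((inner ℝ (gradient g a) v : ℝ) + L * t * ‖v‖ ^ 2)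
      = (inner ℝ (gradient g a) v : ℝ) + L / 2 * ‖v‖ ^ 2 := by
    rw [intervalIntegral.integral_add (intervalIntegrable_const)
      ((by fun_prop : Continuous fun t : ℝ => L * t * ‖v‖ ^ 2).intervalIntegrable 0 1)]
    have : ∫ t in (0:ℝ)..1, L * t * ‖v‖ ^ 2 = L / 2 * ‖v‖ ^ 2 := by
      have : (fun t : ℝ => L * t * ‖v‖ ^ 2) = fun t : ℝ => (L * ‖v‖ ^ 2) * t := by
        funext t; ring
      rw [this, intervalIntegral.integral_const_mul, integral_id]
      ring
    rw [this]
    simp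
  have h0 : c 0 = a := by simp [hc]
  have h1 : c 1 = b := by simp [hc, hv]
  rw [h0, h1] at hfund
  rw [hval] at hmono
  rw [hfund] at hmono
  linarith

lemma cocoercivity (g : E → ℝ) (hg : ConvexOn ℝ Set.univ g) (hd : Differentiable ℝ g)
    (L : ℝ) (hL : 0 < L)
    (hlip : ∀ p q, ‖gradient g p - gradient g q‖ ≤ L * ‖p - q‖) (x y : E) :
    ‖gradient g x - gradient g y‖ ^ 2
      ≤ 2 * L * (g x - g y - (inner ℝ (gradient g y) (x - y) : ℝ)) := by
  set w := gradient g x - gradient g y with hw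
  set z := x - L⁻¹ • w with hz
  have h1 := convex_first_order g hg hd y z
  have h2 := descent_lemma g hd L hL.le hlip x z
  have hzx : z - x = -(L⁻¹ • w) := by simp [hz]
  have hzy : z - y = (x - y) - L⁻¹ • w := by simp [hz]; abel
  have e1 : (inner ℝ (gradient g y) (z - y) : ℝ)
      = (inner ℝ (gradient g y) (x - y) : ℝ) - L⁻¹ * (inner ℝ (gradient g y) w : ℝ) := by
    rw [hzy, inner_sub_right, real_inner_smul_right]
  have e2 : (inner ℝ (gradient g x) (z - x) : ℝ) = -(L⁻¹ * (inner ℝ (gradient g x) w : ℝ)) := by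
    rw [hzx, inner_neg_right, real_inner_smul_right]
  have e3 : ‖z - x‖ ^ 2 = L⁻¹ ^ 2 * ‖w‖ ^ 2 := by
    rw [hzx, norm_neg, norm_smul]
    rw [Real.norm_eq_abs, abs_of_pos (inv_pos.mpr hL)]
    ring
  have e4 : (inner ℝ (gradient g x) w : ℝ) - (inner ℝ (gradient g y) w : ℝ) = ‖w‖ ^ 2 := by
    rw [← inner_sub_left, ← hw, real_inner_self_eq_norm_sq]
  rw [e1] at h1
  rw [e2, e3] at h2
  have hLinv : L * L⁻¹ = 1 := mul_inv_cancel₀ hL.ne'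
  have e4' : L⁻¹ * (inner ℝ (gradient g x) w : ℝ) - L⁻¹ * (inner ℝ (gradient g y) w : ℝ)
      = L⁻¹ * ‖w‖ ^ 2 := by rw [← mul_sub, e4]
  have e5 : L / 2 * (L⁻¹ ^ 2 * ‖w‖ ^ 2) = L⁻¹ / 2 * ‖w‖ ^ 2 := by
    field_simp
  have key : L⁻¹ / 2 * ‖w‖ ^ 2 ≤ g x - g y - (inner ℝ (gradient g y) (x - y) : ℝ) := by
    linarith [h1.trans h2]
  have hmul := mul_le_mul_of_nonneg_left key (by positivity : (0:ℝ) ≤ 2 * L)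
  have hfin : 2 * L * (L⁻¹ / 2 * ‖w‖ ^ 2) = ‖w‖ ^ 2 := by
    have : 2 * L * (L⁻¹ / 2 * ‖w‖ ^ 2) = (L * L⁻¹) * ‖w‖ ^ 2 := by ring
    rw [this, hLinv, one_mul]
  linarith [hmul, hfin.symm.le]

/-- If each `f i` is convex and `Lmax`-smooth, `F = (1/n) ∑ f i`, and `∇F x⋆ = 0`,
then `(1/n) ∑ ‖∇f_i(x) − ∇f_i(x⋆)‖² ≤ 2 L_max (F(x) − F(x⋆))`. -/
theorem expected_smoothness
    {d n : ℕ} (hn : 0 < n)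
    (f : Fin n → EuclideanSpace ℝ (Fin d) → ℝ)
    (Lmax : ℝ)
    (hconv : ∀ i, ConvexOn ℝ Set.univ (f i))
    (hdiff : ∀ i, Differentiable ℝ (f i))
    (hlip : ∀ i x y, ‖gradient (f i) x - gradient (f i) y‖ ≤ Lmax * ‖x - y‖)
    (F : EuclideanSpace ℝ (Fin d) → ℝ)
    (hF : ∀ x, F x = (1 / (n : ℝ)) * ∑ i, f i x)
    (xstar : EuclideanSpace ℝ (Fin d))
    (hstar : gradient F xstar = 0) :
    ∀ x : EuclideanSpace ℝ (Fin d),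
      (1 / (n : ℝ)) * ∑ i, ‖gradient (f i) x - gradient (f i) xstar‖ ^ 2
        ≤ 2 * Lmax * (F x - F xstar) := by
  
  intro x
  have hn' : (0:ℝ) < n := Nat.cast_pos.mpr hn
  have hnne : (n:ℝ) ≠ 0 := hn'.ne'
  -- the sum of all f i is differentiable
  have hsumdiff : ∀ p, DifferentiableAt ℝ (fun z => ∑ i, f i z) p := fun p =>
    DifferentiableAt.fun_sum (fun i _ => (hdiff i) p)
  have hFeq : F = fun z => (1 / (n : ℝ)) * ∑ i, f i z := funext hF
  -- ∑ ⟪∇f_i x⋆, v⟫ = 0 for every v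
  have hsum0 : ∀ v, ∑ i, (inner ℝ (gradient (f i) xstar) v : ℝ) = 0 := by
    intro v
    have hFd : fderiv ℝ F xstar v
        = (1 / (n : ℝ)) * fderiv ℝ (fun z => ∑ i, f i z) xstar v := by
      rw [hFeq, fderiv_const_mul (hsumdiff xstar)]
      simp
    have hF0 : fderiv ℝ F xstar v = 0 := by
      rw [← inner_gradient_eq, hstar, inner_zero_left]
    have hsum : fderiv ℝ (fun z => ∑ i, f i z) xstar v
        = ∑ i, fderiv ℝ (f i) xstar v := by
      rw [fderiv_fun_sum (fun i _ => (hdiff i) xstar)]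
      simp
    have : (1 / (n : ℝ)) * ∑ i, fderiv ℝ (f i) xstar v = 0 := by
      rw [← hsum, ← hFd, hF0]
    have h2 : ∑ i, fderiv ℝ (f i) xstar v = 0 := by
      field_simp at this
      simpa using this
    calc ∑ i, (inner ℝ (gradient (f i) xstar) v : ℝ)
        = ∑ i, fderiv ℝ (f i) xstar v := by
          exact Finset.sum_congr rfl fun i _ => inner_gradient_eq _ _ _
      _ = 0 := h2
  have hFsub : F x - F xstar = (1 / (n : ℝ)) * ∑ i, (f i x - f i xstar) := by
    rw [hF x, hF xstar, ← mul_sub, ← Finset.sum_sub_distrib]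
  rcases lt_or_ge 0 Lmax with hL | hL
  · -- main case
    have key : ∀ i, ‖gradient (f i) x - gradient (f i) xstar‖ ^ 2
        ≤ 2 * Lmax * (f i x - f i xstar
          - (inner ℝ (gradient (f i) xstar) (x - xstar) : ℝ)) := fun i =>
      cocoercivity (f i) (hconv i) (hdiff i) Lmax hL (hlip i) x xstar
    have hsumle : ∑ i, ‖gradient (f i) x - gradient (f i) xstar‖ ^ 2
        ≤ ∑ i, 2 * Lmax * (f i x - f i xstar
          - (inner ℝ (gradient (f i) xstar) (x - xstar) : ℝ)) :=
      Finset.sum_le_sum fun i _ => key i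
    have hrhs : ∑ i, 2 * Lmax * (f i x - f i xstar
          - (inner ℝ (gradient (f i) xstar) (x - xstar) : ℝ))
        = 2 * Lmax * ∑ i, (f i x - f i xstar) := by
      rw [← Finset.mul_sum, Finset.sum_sub_distrib, hsum0 (x - xstar), sub_zero]
    have : (1 / (n : ℝ)) * ∑ i, ‖gradient (f i) x - gradient (f i) xstar‖ ^ 2
        ≤ (1 / (n : ℝ)) * (2 * Lmax * ∑ i, (f i x - f i xstar)) := by
      apply mul_le_mul_of_nonneg_left _ (by positivity)
      rw [← hrhs]; exact hsumle
    calc (1 / (n : ℝ)) * ∑ i, ‖gradient (f i) x - gradient (f i) xstar‖ ^ 2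
        ≤ (1 / (n : ℝ)) * (2 * Lmax * ∑ i, (f i x - f i xstar)) := this
      _ = 2 * Lmax * (F x - F xstar) := by rw [hFsub]; ring
  · -- degenerate case Lmax ≤ 0 : all gradients are constant
    have hgradconst : ∀ i (p q : EuclideanSpace ℝ (Fin d)),
        gradient (f i) p = gradient (f i) q := by
      intro i p q
      have h := hlip i p q
      have h2 : Lmax * ‖p - q‖ ≤ 0 := mul_nonpos_of_nonpos_of_nonneg hL (norm_nonneg _)
      have : ‖gradient (f i) p - gradient (f i) q‖ = 0 :=
        le_antisymm (h.trans h2) (norm_nonneg _)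
      rwa [norm_eq_zero, sub_eq_zero] at this
    have hlin : ∀ i, f i x - f i xstar
        = (inner ℝ (gradient (f i) xstar) (x - xstar) : ℝ) := by
      intro i
      have h1 := convex_first_order (f i) (hconv i) (hdiff i) xstar x
      have h2 := convex_first_order (f i) (hconv i) (hdiff i) x xstar
      rw [hgradconst i x xstar] at h2
      have : (inner ℝ (gradient (f i) xstar) (xstar - x) : ℝ)
          = -(inner ℝ (gradient (f i) xstar) (x - xstar) : ℝ) := by
        rw [← inner_neg_right, neg_sub]
      rw [this] at h2
      linarith
    have hFx : F x - F xstar = 0 := by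
      rw [hFsub]
      rw [Finset.sum_congr rfl fun i _ => hlin i, hsum0 (x - xstar), mul_zero]
    have hlhs : (1 / (n : ℝ)) * ∑ i, ‖gradient (f i) x - gradient (f i) xstar‖ ^ 2 = 0 := by
      have : ∀ i ∈ Finset.univ, ‖gradient (f i) x - gradient (f i) xstar‖ ^ 2 = 0 := by
        intro i _
        rw [hgradconst i x xstar, sub_self, norm_zero]
        norm_num
      rw [Finset.sum_congr rfl this]
      simp
    rw [hlhs, hFx, mul_zero]
end

section
/- Let f_1, …, f_n : ℝ^d → ℝ each be convex and differentiable with L_max-Lipschitz gradient, let f(x) = (1/n)∑_{i=1}^n f_i(x), and let x⋆ satisfy ∇f(x⋆) = 0. Then the SGD⋆ gradient estimate g(x, i) = ∇f_i(x) − ∇f_i(x⋆) with i uniform on {1,…,n} satisfies the variance-reduction bound (1/n)∑_{i=1}^n ‖(∇f_i(x) − ∇f_i(x⋆)) − ∇f(x)‖² ≤ 2 L_max (f(x) − f(x⋆)) for every x ∈ ℝ^d. -/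
open scoped BigOperators
open Set InnerProductSpace

variable {E : Type*} [NormedAddCommGroup E] [InnerProductSpace ℝ E] [CompleteSpace E]

local notation "⟪" x ", " y "⟫" => @inner ℝ _ _ x y

private lemma dirDeriv (g : E → ℝ) (hg : Differentiable ℝ g) (x v : E) (t : ℝ) :
    HasDerivAt (fun s : ℝ => g (x + s • v)) ⟪gradient g (x + t • v), v⟫ t := by
  have h1 : HasDerivAt (fun s : ℝ => x + s • v) v t := by
    simpa using ((hasDerivAt_id t).smul_const v).const_add x
  have h2 : HasFDerivAt g (toDual ℝ E (gradient g (x + t • v))) (x + t • v) :=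
    (hg (x + t • v)).hasGradientAt.hasFDerivAt
  simpa [toDual_apply_apply, Function.comp_def] using h2.comp_hasDerivAt t h1

/-- first-order condition for convexity -/
private lemma convex_lower (g : E → ℝ) (hc : ConvexOn ℝ univ g)
    (hg : Differentiable ℝ g) (x y : E) :
    g x + ⟪gradient g x, y - x⟫ ≤ g y := by
  set v := y - x with hv
  set φ : ℝ → ℝ := fun s => g (x + s • v) with hφ
  have hφc : ConvexOn ℝ univ φ := by
    have h := hc.comp_affineMap (AffineMap.lineMap x y : ℝ →ᵃ[ℝ] E)
    have heq : φ = g ∘ (AffineMap.lineMap x y : ℝ →ᵃ[ℝ] E) := by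
      funext s
      simp [hφ, AffineMap.lineMap_apply, hv, add_comm]
    rw [heq]
    simpa using h
  have hder : HasDerivAt φ ⟪gradient g x, v⟫ 0 := by
    simpa using dirDeriv g hg x v 0
  have := hφc.le_slope_of_hasDerivAt (mem_univ (0:ℝ)) (mem_univ (1:ℝ)) one_pos hder
  rw [slope_def_field] at this
  have h01 : φ 1 = g y := by simp [hφ, hv]
  have h00 : φ 0 = g x := by simp [hφ]
  simp [h01, h00, -inner_gradient_left] at this
  linarith

/-- descent lemma for L-smooth functions -/
private lemma descent (g : E → ℝ) (hg : Differentiable ℝ g) (L : ℝ)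
    (hlip : ∀ a b, ‖gradient g a - gradient g b‖ ≤ L * ‖a - b‖) (x y : E) :
    g y ≤ g x + ⟪gradient g x, y - x⟫ + L / 2 * ‖y - x‖ ^ 2 := by
  set v := y - x with hv
  set ψ : ℝ → ℝ := fun t => g (x + t • v) - t * ⟪gradient g x, v⟫ - L * t ^ 2 / 2 * ‖v‖ ^ 2
    with hψ
  have hder : ∀ t : ℝ, HasDerivAt ψ
      (⟪gradient g (x + t • v), v⟫ - ⟪gradient g x, v⟫ - L * t * ‖v‖ ^ 2) t := by
    intro t
    have h1 := dirDeriv g hg x v t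
    have h2 : HasDerivAt (fun t : ℝ => t * ⟪gradient g x, v⟫) ⟪gradient g x, v⟫ t := by
      simpa using (hasDerivAt_id t).mul_const ⟪gradient g x, v⟫
    have h3 : HasDerivAt (fun t : ℝ => L * t ^ 2 / 2 * ‖v‖ ^ 2) (L * t * ‖v‖ ^ 2) t := by
      have : HasDerivAt (fun t : ℝ => t ^ 2) (2 * t) t := by
        simpa using hasDerivAt_pow 2 t
      have := ((this.const_mul L).div_const 2).mul_const (‖v‖ ^ 2)
      rw [show L * t * ‖v‖ ^ 2 = L * (2 * t) / 2 * ‖v‖ ^ 2 by ring]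
      exact this
    exact (h1.fun_sub h2).fun_sub h3
  have hanti : AntitoneOn ψ (Icc (0:ℝ) 1) := by
    apply antitoneOn_of_deriv_nonpos (convex_Icc 0 1)
    · exact fun t _ => ((hder t).differentiableAt).continuousAt.continuousWithinAt
    · exact fun t _ => ((hder t).differentiableAt).differentiableWithinAt
    · intro t ht
      rw [interior_Icc] at ht
      rw [(hder t).deriv]
      have hb : ⟪gradient g (x + t • v) - gradient g x, v⟫ ≤ L * t * ‖v‖ ^ 2 := by
        calc ⟪gradient g (x + t • v) - gradient g x, v⟫
            ≤ ‖gradient g (x + t • v) - gradient g x‖ * ‖v‖ :=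
              real_inner_le_norm _ _
          _ ≤ (L * ‖(x + t • v) - x‖) * ‖v‖ := by
              have := hlip (x + t • v) x
              simpa using mul_le_mul_of_nonneg_right (by simpa using this) (norm_nonneg v)
          _ = L * t * ‖v‖ ^ 2 := by
              rw [add_sub_cancel_left, norm_smul]
              simp [abs_of_pos ht.1]
              ring
      rw [inner_sub_left] at hb
      linarith
  have h10 := hanti (left_mem_Icc.2 zero_le_one) (right_mem_Icc.2 zero_le_one) zero_le_one
  have h1 : ψ 1 = g y - ⟪gradient g x, v⟫ - L / 2 * ‖v‖ ^ 2 := by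
    simp [hψ, hv]
  have h0 : ψ 0 = g x := by simp [hψ]
  rw [h1, h0] at h10
  linarith

/-- Bregman cocoercivity bound for convex L-smooth functions. -/
private lemma bregman_bound (g : E → ℝ) (hc : ConvexOn ℝ univ g)
    (hg : Differentiable ℝ g) (L : ℝ)
    (hlip : ∀ a b, ‖gradient g a - gradient g b‖ ≤ L * ‖a - b‖) (x y : E) :
    ‖gradient g x - gradient g y‖ ^ 2
      ≤ 2 * L * (g x - g y - ⟪gradient g y, x - y⟫) := by
  rcases le_or_gt L 0 with hL | hL
  · -- gradient constant, Bregman term zero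
    have hgr : ∀ a b : E, gradient g a = gradient g b := by
      intro a b
      have h := hlip a b
      have : ‖gradient g a - gradient g b‖ ≤ 0 :=
        h.trans (mul_nonpos_of_nonpos_of_nonneg hL (norm_nonneg _))
      have := le_antisymm this (norm_nonneg _)
      rwa [norm_eq_zero, sub_eq_zero] at this
    have h1 := convex_lower g hc hg y x
    have h2 := convex_lower g hc hg x y
    rw [hgr x y] at h2
    have hinner : ⟪gradient g y, y - x⟫ = - ⟪gradient g y, x - y⟫ := by
      rw [← inner_neg_right, neg_sub]
    rw [hinner] at h2
    have hB : g x - g y - ⟪gradient g y, x - y⟫ = 0 := by linarith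
    rw [hgr x y, hB]
    simp
  · -- main case L > 0
    set c := gradient g y with hcdef
    set h : E → ℝ := fun z => g z - ⟪c, z⟫ with hh
    have hgradh : ∀ z, HasGradientAt h (gradient g z - c) z := by
      intro z
      have h1 : HasFDerivAt g (toDual ℝ E (gradient g z)) z :=
        (hg z).hasGradientAt.hasFDerivAt
      have h2 : HasFDerivAt (fun z : E => ⟪c, z⟫) (toDual ℝ E c) z :=
        (toDual ℝ E c).hasFDerivAt
      have h3 := h1.fun_sub h2
      rw [← map_sub] at h3
      simpa [-toDual_gradient] using h3.hasGradientAt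
    have hgradval : ∀ z, gradient h z = gradient g z - c :=
      fun z => (hgradh z).gradient
    have hhdiff : Differentiable ℝ h :=
      fun z => (hgradh z).differentiableAt
    have hhconv : ConvexOn ℝ univ h := by
      refine ⟨convex_univ, ?_⟩
      intro a _ b _ p q hp hq hpq
      have := hc.2 (mem_univ a) (mem_univ b) hp hq hpq
      simp only [hh, smul_eq_mul]
      rw [inner_add_right, real_inner_smul_right, real_inner_smul_right]
      simp only [smul_eq_mul] at this
      linarith
    have hhlip : ∀ a b : E, ‖gradient h a - gradient h b‖ ≤ L * ‖a - b‖ := by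
      intro a b
      rw [hgradval a, hgradval b]
      simpa [sub_sub_sub_cancel_right] using hlip a b
    have hhy : gradient h y = 0 := by
      rw [hgradval y, hcdef, sub_self]
    -- y is the global minimum of h
    have hmin : ∀ w : E, h y ≤ h w := by
      intro w
      have := convex_lower h hhconv hhdiff y w
      rw [hhy] at this
      simpa using this
    -- descent step
    set w := x - L⁻¹ • gradient h x with hw
    have hdes := descent h hhdiff L hhlip x w
    have hwx : w - x = -(L⁻¹ • gradient h x) := by rw [hw]; abel
    have hinner : ⟪gradient h x, w - x⟫ = - (L⁻¹ * ‖gradient h x‖ ^ 2) := by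
      rw [hwx, inner_neg_right, real_inner_smul_right, real_inner_self_eq_norm_sq]
    have hnrm : ‖w - x‖ ^ 2 = L⁻¹ ^ 2 * ‖gradient h x‖ ^ 2 := by
      rw [hwx, norm_neg, norm_smul, mul_pow]
      congr 1
      rw [Real.norm_eq_abs, sq_abs]
    have key : h y ≤ h x - ‖gradient h x‖ ^ 2 / (2 * L) := by
      have := (hmin w).trans hdes
      rw [hinner, hnrm] at this
      have hL' : L ≠ 0 := ne_of_gt hL
      have : h y ≤ h x - L⁻¹ * ‖gradient h x‖ ^ 2
          + L / 2 * (L⁻¹ ^ 2 * ‖gradient h x‖ ^ 2) := by linarith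
      calc h y ≤ h x - L⁻¹ * ‖gradient h x‖ ^ 2
          + L / 2 * (L⁻¹ ^ 2 * ‖gradient h x‖ ^ 2) := this
        _ = h x - ‖gradient h x‖ ^ 2 / (2 * L) := by
            field_simp
            ring
    have hgx : gradient h x = gradient g x - c := hgradval x
    have hxy : h x - h y = g x - g y - ⟪c, x - y⟫ := by
      simp only [hh]
      rw [inner_sub_right]
      ring
    have h2L : (0:ℝ) < 2 * L := by linarith
    rw [hgx] at key
    have : ‖gradient g x - c‖ ^ 2 / (2 * L) ≤ h x - h y := by linarith
    rw [div_le_iff₀ h2L] at this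
    rw [hxy] at this
    linarith

private lemma gradF {n : ℕ} {E : Type*} [NormedAddCommGroup E] [InnerProductSpace ℝ E]
    [CompleteSpace E] (f : Fin n → E → ℝ) (hdiff : ∀ i, Differentiable ℝ (f i))
    (F : E → ℝ) (hF : ∀ x, F x = (1 / (n : ℝ)) * ∑ i, f i x) (z : E) :
    gradient F z = (1 / (n : ℝ)) • ∑ i, gradient (f i) z := by
  have hFfun : F = fun x => (1 / (n : ℝ)) * ∑ i, f i x := funext hF
  have h1 : HasFDerivAt (fun x : E => ∑ i, f i x)
      (∑ i, toDual ℝ E (gradient (f i) z)) z :=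
    HasFDerivAt.fun_sum fun i _ => ((hdiff i) z).hasGradientAt.hasFDerivAt
  have h2 : HasFDerivAt F ((1 / (n : ℝ)) • ∑ i, toDual ℝ E (gradient (f i) z)) z := by
    rw [hFfun]
    exact h1.const_mul _
  have h3 : ((1 / (n : ℝ)) • ∑ i, toDual ℝ E (gradient (f i) z))
      = toDual ℝ E ((1 / (n : ℝ)) • ∑ i, gradient (f i) z) := by
    rw [map_smul, map_sum]
  rw [h3] at h2
  simpa [-toDual_gradient] using h2.hasGradientAt.gradient



open scoped BigOperators

/-- Variance-reduction bound for the SGD⋆ gradient estimate: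
`(1/n) ∑ ‖(∇f_i(x) − ∇f_i(x⋆)) − ∇f(x)‖² ≤ 2 L_max (f(x) − f(x⋆))`. -/
theorem sgd_star_variance_bound
    {d n : ℕ} (hn : 0 < n)
    (f : Fin n → EuclideanSpace ℝ (Fin d) → ℝ)
    (Lmax : ℝ)
    (hconv : ∀ i, ConvexOn ℝ Set.univ (f i))
    (hdiff : ∀ i, Differentiable ℝ (f i))
    (hlip : ∀ i x y, ‖gradient (f i) x - gradient (f i) y‖ ≤ Lmax * ‖x - y‖)
    (F : EuclideanSpace ℝ (Fin d) → ℝ)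
    (hF : ∀ x, F x = (1 / (n : ℝ)) * ∑ i, f i x)
    (xstar : EuclideanSpace ℝ (Fin d))
    (hstar : gradient F xstar = 0) :
    ∀ x : EuclideanSpace ℝ (Fin d),
      (1 / (n : ℝ)) * ∑ i,
          ‖(gradient (f i) x - gradient (f i) xstar) - gradient F x‖ ^ 2
        ≤ 2 * Lmax * (F x - F xstar) := by
  intro x
  have hn0 : (0:ℝ) < (n:ℝ) := by exact_mod_cast hn
  have hn' : (n:ℝ) ≠ 0 := ne_of_gt hn0
  have hGF : ∀ z, gradient F z = (1 / (n : ℝ)) • ∑ i, gradient (f i) z :=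
    gradF f hdiff F hF
  have hsum_star : ∑ i, gradient (f i) xstar = 0 := by
    have h := hGF xstar
    rw [hstar] at h
    have := h.symm
    rcases smul_eq_zero.mp this with h' | h'
    · exact absurd h' (by positivity)
    · exact h'
  set m := gradient F x with hm
  set a : Fin n → EuclideanSpace ℝ (Fin d) :=
    fun i => gradient (f i) x - gradient (f i) xstar with ha
  have hsum_a : ∑ i, a i = (n:ℝ) • m := by
    rw [ha]
    rw [Finset.sum_sub_distrib, hsum_star, sub_zero, hm, hGF x, smul_smul]
    rw [mul_one_div, div_self hn', one_smul]
  have hvar : ∑ i, ‖a i - m‖ ^ 2 ≤ ∑ i, ‖a i‖ ^ 2 := by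
    have h1 : ∑ i, ‖a i - m‖ ^ 2
        = ∑ i, ‖a i‖ ^ 2 - 2 * ⟪∑ i, a i, m⟫ + (n:ℝ) * ‖m‖ ^ 2 := by
      rw [Finset.sum_congr rfl fun i _ => norm_sub_sq_real (a i) m]
      rw [Finset.sum_add_distrib, Finset.sum_sub_distrib, Finset.sum_const,
        Finset.card_univ, Fintype.card_fin, ← Finset.mul_sum, ← sum_inner]
      push_cast
      ring
    have h2 : ⟪∑ i, a i, m⟫ = (n:ℝ) * ‖m‖ ^ 2 := by
      rw [hsum_a, real_inner_smul_left, real_inner_self_eq_norm_sq]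
    rw [h1, h2]
    nlinarith [norm_nonneg m, sq_nonneg ‖m‖, hn0]
  have hbreg : ∀ i, ‖a i‖ ^ 2
      ≤ 2 * Lmax * (f i x - f i xstar - ⟪gradient (f i) xstar, x - xstar⟫) :=
    fun i => bregman_bound (f i) (hconv i) (hdiff i) Lmax (hlip i) x xstar
  have hsum2 : ∑ i, ‖a i‖ ^ 2 ≤ 2 * Lmax * ((n:ℝ) * (F x - F xstar)) := by
    calc ∑ i, ‖a i‖ ^ 2
        ≤ ∑ i, 2 * Lmax * (f i x - f i xstar - ⟪gradient (f i) xstar, x - xstar⟫) :=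
          Finset.sum_le_sum fun i _ => hbreg i
      _ = 2 * Lmax * ((∑ i, f i x) - (∑ i, f i xstar)
            - ⟪∑ i, gradient (f i) xstar, x - xstar⟫) := by
          rw [← Finset.mul_sum, Finset.sum_sub_distrib, Finset.sum_sub_distrib, sum_inner]
      _ = 2 * Lmax * ((n:ℝ) * (F x - F xstar)) := by
          rw [hsum_star]
          have hx1 : (∑ i, f i x) = (n:ℝ) * F x := by
            rw [hF x]; field_simp
          have hx2 : (∑ i, f i xstar) = (n:ℝ) * F xstar := by
            rw [hF xstar]; field_simp
          rw [hx1, hx2]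
          simp only [inner_zero_left, sub_zero]
          ring
  calc (1 / (n : ℝ)) * ∑ i, ‖a i - m‖ ^ 2
      ≤ (1 / (n : ℝ)) * ∑ i, ‖a i‖ ^ 2 := by
        exact mul_le_mul_of_nonneg_left hvar (by positivity)
    _ ≤ (1 / (n : ℝ)) * (2 * Lmax * ((n:ℝ) * (F x - F xstar))) :=
        mul_le_mul_of_nonneg_left hsum2 (by positivity)
    _ = 2 * Lmax * (F x - F xstar) := by
        field_simp
end

section
/- Let f_1, …, f_n : ℝ^d → ℝ be differentiable, each with L_max-Lipschitz gradient, let f(x) = (1/n)∑_{i=1}^n f_i(x), and fix a reference point x̄ ∈ ℝ^d. Then the SVRG gradient estimate g(x, i) = ∇f_i(x) − ∇f_i(x̄) + ∇f(x̄), with i uniform on {1,…,n}, satisfies (1/n)∑_{i=1}^n ‖g(x, i) − ∇f(x)‖² ≤ L_max² ‖x − x̄‖² for every x ∈ ℝ^d. -/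
open scoped BigOperators

/-- Variance bound for the SVRG gradient estimate
`g(x,i) = ∇f_i(x) − ∇f_i(x̄) + ∇f(x̄)`:
`(1/n) ∑ ‖g(x,i) − ∇f(x)‖² ≤ L_max² ‖x − x̄‖²`. -/
theorem svrg_variance_bound
    {d n : ℕ} (hn : 0 < n)
    (f : Fin n → EuclideanSpace ℝ (Fin d) → ℝ)
    (Lmax : ℝ)
    (hdiff : ∀ i, Differentiable ℝ (f i))
    (hlip : ∀ i x y, ‖gradient (f i) x - gradient (f i) y‖ ≤ Lmax * ‖x - y‖)
    (F : EuclideanSpace ℝ (Fin d) → ℝ)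
    (hF : ∀ x, F x = (1 / (n : ℝ)) * ∑ i, f i x)
    (xbar : EuclideanSpace ℝ (Fin d)) :
    ∀ x : EuclideanSpace ℝ (Fin d),
      (1 / (n : ℝ)) * ∑ i,
          ‖(gradient (f i) x - gradient (f i) xbar + gradient F xbar) - gradient F x‖ ^ 2
        ≤ Lmax ^ 2 * ‖x - xbar‖ ^ 2 := by
  intro x
  have hne : (n : ℝ) ≠ 0 := Nat.cast_ne_zero.mpr hn.ne'
  -- gradient of F
  have hFfun : F = fun y => (1 / (n : ℝ)) • ∑ i, f i y := by
    funext y; rw [hF y, smul_eq_mul]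
  have hgradF : ∀ y, gradient F y = (1 / (n : ℝ)) • ∑ i, gradient (f i) y := by
    intro y
    have hfd : fderiv ℝ F y = (1 / (n : ℝ)) • ∑ i, fderiv ℝ (f i) y := by
      rw [hFfun]
      rw [fderiv_fun_const_smul ((Differentiable.fun_sum
        (fun i _ => hdiff i)).differentiableAt) (1 / (n : ℝ))]
      congr 1
      rw [fderiv_fun_sum (fun i _ => (hdiff i).differentiableAt)]
    rw [gradient, hfd, map_smul, map_sum]
    rfl
  -- the random vectors and their mean
  set X : Fin n → EuclideanSpace ℝ (Fin d) :=
    fun i => gradient (f i) x - gradient (f i) xbar with hX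
  have hsum : ∑ i, X i = (n : ℝ) • ((1 / (n : ℝ)) • ∑ i, X i) := by
    rw [smul_smul, mul_one_div, div_self hne, one_smul]
  set μ : EuclideanSpace ℝ (Fin d) := (1 / (n : ℝ)) • ∑ i, X i with hμ
  have hterm : ∀ i, (gradient (f i) x - gradient (f i) xbar + gradient F xbar)
      - gradient F x = X i - μ := by
    intro i
    rw [hgradF, hgradF, hμ, hX]
    simp only [Finset.smul_sum, smul_sub, Finset.sum_sub_distrib]
    abel
  calc (1 / (n : ℝ)) * ∑ i,
          ‖(gradient (f i) x - gradient (f i) xbar + gradient F xbar) - gradient F x‖ ^ 2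
      = (1 / (n : ℝ)) * ∑ i, ‖X i - μ‖ ^ 2 := by
        congr 1; exact Finset.sum_congr rfl fun i _ => by rw [hterm i]
    _ ≤ (1 / (n : ℝ)) * ∑ i, ‖X i‖ ^ 2 := by
        apply mul_le_mul_of_nonneg_left _ (by positivity)
        have expand : ∑ i, ‖X i - μ‖ ^ 2
            = (∑ i, ‖X i‖ ^ 2) - (n : ℝ) * ‖μ‖ ^ 2 := by
          have h1 : ∀ i : Fin n, ‖X i - μ‖ ^ 2
              = ‖X i‖ ^ 2 - 2 * inner ℝ (X i) μ + ‖μ‖ ^ 2 :=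
            fun i => norm_sub_sq_real (X i) μ
          rw [Finset.sum_congr rfl fun i _ => h1 i]
          rw [Finset.sum_add_distrib, Finset.sum_sub_distrib,
            ← Finset.mul_sum, ← sum_inner]
          have : (inner ℝ (∑ i, X i) μ : ℝ) = (n : ℝ) * ‖μ‖ ^ 2 := by
            rw [hsum, real_inner_smul_left, real_inner_self_eq_norm_sq]
          rw [this]
          simp [Finset.card_univ]
          ring
        rw [expand]
        have : 0 ≤ (n : ℝ) * ‖μ‖ ^ 2 := by positivity
        linarith
    _ ≤ (1 / (n : ℝ)) * ∑ _i : Fin n, Lmax ^ 2 * ‖x - xbar‖ ^ 2 := by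
        apply mul_le_mul_of_nonneg_left _ (by positivity)
        apply Finset.sum_le_sum
        intro i _
        have h := hlip i x xbar
        have h2 : ‖X i‖ ^ 2 ≤ (Lmax * ‖x - xbar‖) ^ 2 := by
          have := sq_nonneg (Lmax * ‖x - xbar‖)
          nlinarith [norm_nonneg (X i)]
        calc ‖X i‖ ^ 2 ≤ (Lmax * ‖x - xbar‖) ^ 2 := h2
          _ = Lmax ^ 2 * ‖x - xbar‖ ^ 2 := by ring
    _ = Lmax ^ 2 * ‖x - xbar‖ ^ 2 := by
        rw [Finset.sum_const, Finset.card_univ, Fintype.card_fin, nsmul_eq_mul]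
        field_simp
end
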